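/- arXiv:2107.01804 — 4 statements merged into one kernel-verified Lean document; each statement's English description precedes it below -/
import Mathlib

section
/- Let X be a finite set of n points in Euclidean space ℝ^m and let F ⊆ X be any set of facilities. If there exists a point p ∈ X such that no facility of F lies in the closed ball B(p, 3·r_p) (i.e. B(p, 3r_p) ∩ F = ∅), then cost(F ∪ {p}) < cost(F); that is, opening a new facility at p strictly decreases the facility location cost. -/
open MeasureTheory ProbabilityTheory Finset Filter
open scoped ENNReal NNReal Classical

noncomputable section

/-- Facility location cost of a set of facilities `F` for a dataset `X`:
the number of open facilities plus the sum of distances to the nearest facility. -/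
def flCost {m : ℕ} (X F : Finset (EuclideanSpace ℝ (Fin m))) : ℝ :=
  F.card + ∑ x ∈ X, sInf ((fun f => dist x f) '' (F : Set (EuclideanSpace ℝ (Fin m))))

/-- `r` is the Mettu–Plaxton radius of `p` for the point set `Y`:
`∑_{q ∈ Y, ‖p−q‖ ≤ r} (r − ‖p−q‖) = 1`. -/
def IsRadius {m : ℕ} (Y : Finset (EuclideanSpace ℝ (Fin m))) (p : EuclideanSpace ℝ (Fin m))
    (r : ℝ) : Prop :=
  0 < r ∧ ∑ q ∈ Y.filter (fun q => dist p q ≤ r), (r - dist p q) = 1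

/-- Lemma: local improvement for facility location.
If no facility of `F` lies in the closed ball `B(p, 3 r_p)`, then opening a facility
at `p` strictly decreases the facility location cost. -/
theorem facility_location_local_improvement {m : ℕ}
    (X F : Finset (EuclideanSpace ℝ (Fin m))) (hFX : F ⊆ X) (hFne : F.Nonempty)
    (p : EuclideanSpace ℝ (Fin m)) (hp : p ∈ X) (rp : ℝ) (hrp : IsRadius X p rp)
    (hfar : ∀ f ∈ F, 3 * rp < dist p f) :
    flCost X (insert p F) < flCost X F := by
  obtain ⟨hrpos, hsum⟩ := hrp
  -- p ∉ F
  have hpF : p ∉ F := by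
    intro hmem
    have := hfar p hmem
    simp only [dist_self] at this
    linarith
  -- notation
  set dOld : EuclideanSpace ℝ (Fin m) → ℝ :=
    fun x => sInf ((fun f => dist x f) '' (F : Set (EuclideanSpace ℝ (Fin m)))) with hdOld
  set dNew : EuclideanSpace ℝ (Fin m) → ℝ :=
    fun x => sInf ((fun f => dist x f) '' ((insert p F : Finset _) : Set (EuclideanSpace ℝ (Fin m)))) with hdNew
  have hbddOld : ∀ x, BddBelow ((fun f => dist x f) '' (F : Set (EuclideanSpace ℝ (Fin m)))) :=
    fun x => (F.finite_toSet.image _).bddBelow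
  have hbddNew : ∀ x, BddBelow ((fun f => dist x f) '' ((insert p F : Finset _) : Set (EuclideanSpace ℝ (Fin m)))) :=
    fun x => ((insert p F).finite_toSet.image _).bddBelow
  have hneOld : ∀ x, ((fun f => dist x f) '' (F : Set (EuclideanSpace ℝ (Fin m)))).Nonempty :=
    fun x => (Finset.coe_nonempty.mpr hFne).image _
  -- dNew ≤ dOld
  have hle : ∀ x, dNew x ≤ dOld x := by
    intro x
    apply csInf_le_csInf (hbddNew x) (hneOld x)
    apply Set.image_mono
    intro y hy
    simp only [Finset.coe_insert, Set.mem_insert_iff]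
    exact Or.inr hy
  -- dNew x ≤ dist x p
  have hdp : ∀ x, dNew x ≤ dist x p := by
    intro x
    apply csInf_le (hbddNew x)
    exact ⟨p, by simp, rfl⟩
  -- dOld q > 3rp - dist p q
  have hlow : ∀ q, 3 * rp - dist p q < dOld q := by
    intro q
    have hmem : dOld q ∈ (fun f => dist q f) '' (F : Set (EuclideanSpace ℝ (Fin m))) :=
      (hneOld q).csInf_mem (F.finite_toSet.image _)
    obtain ⟨f, hf, hfq⟩ := hmem
    have hf' : f ∈ F := hf
    have htri : dist p f ≤ dist p q + dist q f := dist_triangle p q f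
    have := hfar f hf'
    rw [← hfq]
    linarith
  -- the key inequality: 1 < ∑ (dOld - dNew)
  set S := X.filter (fun q => dist p q ≤ rp) with hS
  have hSsub : S ⊆ X := Finset.filter_subset _ _
  have hpS : p ∈ S := by
    simp only [hS, Finset.mem_filter, dist_self]
    exact ⟨hp, le_of_lt hrpos⟩
  have hSne : S.Nonempty := ⟨p, hpS⟩
  have step1 : (1 : ℝ) ≤ ∑ q ∈ S, (3 * rp - 2 * dist p q) := by
    rw [← hsum]
    apply Finset.sum_le_sum
    intro q hq
    have hd : dist p q ≤ rp := (Finset.mem_filter.mp hq).2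
    linarith
  have step2 : ∑ q ∈ S, (3 * rp - 2 * dist p q) < ∑ q ∈ S, (dOld q - dNew q) := by
    apply Finset.sum_lt_sum_of_nonempty hSne
    intro q hq
    have h1 := hlow q
    have h2 := hdp q
    have h3 : dist q p = dist p q := dist_comm q p
    linarith
  have step3 : ∑ q ∈ S, (dOld q - dNew q) ≤ ∑ q ∈ X, (dOld q - dNew q) := by
    apply Finset.sum_le_sum_of_subset_of_nonneg hSsub
    intro q _ _
    have := hle q
    linarith
  have hkey : (1 : ℝ) < ∑ q ∈ X, (dOld q - dNew q) := by linarith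
  rw [Finset.sum_sub_distrib] at hkey
  -- conclude
  unfold flCost
  rw [Finset.card_insert_of_notMem hpF]
  push_cast
  simp only [← Finset.coe_insert, ← hdOld, ← hdNew]
  linarith
end
end

section
/- Let X be a finite set of points in a Euclidean space ℝ^m, let t > 0, and suppose X contains r ≥ 2 points x₁, …, x_r that are pairwise at distance greater than t. Then the minimum spanning tree cost M of X satisfies M ≥ r·t/2. -/
open Finset
open scoped Classical

noncomputable section

/-- `T` is (the edge set of) a spanning tree on the index set `Fin n`. -/
def IsSpanningTree (n : ℕ) (T : Finset (Fin n × Fin n)) : Prop :=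
  T.card = n - 1 ∧ (SimpleGraph.fromRel fun i j => (i, j) ∈ T).Connected

/-- Cost of a spanning tree `T`, with edge lengths measured between the points `pts`. -/
def treeCost {m n : ℕ} (pts : Fin n → EuclideanSpace ℝ (Fin m))
    (T : Finset (Fin n × Fin n)) : ℝ :=
  ∑ e ∈ T, dist (pts e.1) (pts e.2)

/-- Minimum spanning tree cost of the point set `pts`. -/
def mstCost {m n : ℕ} (pts : Fin n → EuclideanSpace ℝ (Fin m)) : ℝ :=
  sInf {c | ∃ T, IsSpanningTree n T ∧ treeCost pts T = c}

/-!
Put a tent `gᵢ x = max (t/2 - ‖x - xᵢ‖) 0` on each separated point. The tents are 1-Lipschitz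
with disjoint supports, and the triangle inequality through two centres shows that their total
variation `∑ᵢ |gᵢ a - gᵢ b|` across an edge `ab` is at most `‖a - b‖`. Along the tree path from
`xᵢ` to another separated point, `gᵢ` drops from `t/2` to `0`, so the edges of any spanning tree
carry a variation of at least `t/2` of every tent, that is at least `r·t/2` in total.
-/

section Tent

variable {α : Type*} [PseudoMetricSpace α]

def tent (s : ℝ) (c x : α) : ℝ := max (s - dist x c) 0

variable {s : ℝ}

lemma tent_nonneg (c x : α) : 0 ≤ tent s c x := le_max_right _ _

lemma tent_self (hs : 0 ≤ s) (c : α) : tent s c c = s := by simp [tent, hs]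

lemma tent_eq_zero {c x : α} (h : s ≤ dist x c) : tent s c x = 0 :=
  max_eq_right (by linarith)

lemma tent_pos_iff {c x : α} : 0 < tent s c x ↔ dist x c < s := by
  simp [tent]

lemma tent_eq_of_pos {c x : α} (h : 0 < tent s c x) : tent s c x = s - dist x c :=
  max_eq_left (sub_nonneg.2 (tent_pos_iff.1 h).le)

lemma abs_tent_sub_tent_le (c x y : α) : |tent s c x - tent s c y| ≤ dist x y :=
  calc |tent s c x - tent s c y| ≤ |(s - dist x c) - (s - dist y c)| :=
        abs_max_sub_max_le_abs _ _ _
    _ = |dist y c - dist x c| := by ring_nf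
    _ ≤ dist y x := abs_dist_sub_le _ _ _
    _ = dist x y := dist_comm _ _

variable {ι : Type*} {c : ι → α}

lemma tent_eq_zero_of_tent_pos (hc : Pairwise fun i j => 2 * s ≤ dist (c i) (c j))
    {i j : ι} (hij : i ≠ j) {x : α} (hi : 0 < tent s (c i) x) : tent s (c j) x = 0 := by
  refine tent_eq_zero ?_
  linarith [hc hij, tent_pos_iff.1 hi, dist_triangle_left (c i) (c j) x]

lemma sum_abs_tent_sub_le_dist_of_tent_pos [Fintype ι]
    (hc : Pairwise fun i j => 2 * s ≤ dist (c i) (c j)) {x y : α} {i : ι}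
    (hi : 0 < tent s (c i) x) : ∑ k, |tent s (c k) x - tent s (c k) y| ≤ dist x y := by
  by_cases hy : ∃ j, j ≠ i ∧ 0 < tent s (c j) y
  · obtain ⟨j, hji, hj⟩ := hy
    have hoff : ∀ k, k ≠ i ∧ k ≠ j → |tent s (c k) x - tent s (c k) y| = 0 := by
      rintro k ⟨hki, hkj⟩
      rw [tent_eq_zero_of_tent_pos hc hki.symm hi, tent_eq_zero_of_tent_pos hc hkj.symm hj,
        sub_self, abs_zero]
    rw [Fintype.sum_eq_add i j hji.symm hoff, tent_eq_zero_of_tent_pos hc hji hj,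
      tent_eq_zero_of_tent_pos hc hji.symm hi, sub_zero, zero_sub, abs_neg,
      abs_of_pos hi, abs_of_pos hj, tent_eq_of_pos hi, tent_eq_of_pos hj]
    linarith [hc hji.symm, dist_triangle4 (c i) x y (c j), dist_comm (c i) x]
  · push Not at hy
    have hoff : ∀ k, k ≠ i → |tent s (c k) x - tent s (c k) y| = 0 := fun k hki => by
      rw [tent_eq_zero_of_tent_pos hc hki.symm hi, (hy k hki).antisymm (tent_nonneg _ _),
        sub_self, abs_zero]
    rw [Fintype.sum_eq_single i hoff]
    exact abs_tent_sub_tent_le _ _ _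

theorem sum_abs_tent_sub_le_dist [Fintype ι]
    (hc : Pairwise fun i j => 2 * s ≤ dist (c i) (c j)) (x y : α) :
    ∑ k, |tent s (c k) x - tent s (c k) y| ≤ dist x y := by
  by_cases hx : ∃ i, 0 < tent s (c i) x
  · exact sum_abs_tent_sub_le_dist_of_tent_pos hc hx.choose_spec
  by_cases hy : ∃ i, 0 < tent s (c i) y
  · calc ∑ k, |tent s (c k) x - tent s (c k) y|
          = ∑ k, |tent s (c k) y - tent s (c k) x| := sum_congr rfl fun _ _ => abs_sub_comm _ _
      _ ≤ dist y x := sum_abs_tent_sub_le_dist_of_tent_pos hc hy.choose_spec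
      _ = dist x y := dist_comm _ _
  push Not at hx hy
  calc ∑ k, |tent s (c k) x - tent s (c k) y| = 0 := sum_eq_zero fun k _ => by
        rw [(hx k).antisymm (tent_nonneg _ _), (hy k).antisymm (tent_nonneg _ _), sub_self,
          abs_zero]
    _ ≤ dist x y := dist_nonneg

end Tent

section Graph

variable {V : Type*}

def edgeVariation (F : V → ℝ) : Sym2 V → ℝ :=
  Sym2.lift ⟨fun a b => |F a - F b|, fun _ _ => abs_sub_comm _ _⟩

lemma edgeVariation_nonneg (F : V → ℝ) (e : Sym2 V) : 0 ≤ edgeVariation F e :=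
  e.ind fun _ _ => abs_nonneg _

lemma abs_sub_le_sum_edgeVariation {G : SimpleGraph V} (F : V → ℝ) {u v : V} (w : G.Walk u v) :
    |F u - F v| ≤ (w.edges.map (edgeVariation F)).sum := by
  induction w with
  | nil => simp
  | @cons a b c _ p ih =>
    rw [SimpleGraph.Walk.edges_cons, List.map_cons, List.sum_cons]
    exact (abs_sub_le _ _ _).trans (add_le_add_right ih _)

lemma abs_sub_le_sum_of_reachable {T : Finset (V × V)} (F : V → ℝ) {u v : V}
    (h : (SimpleGraph.fromRel fun a b => (a, b) ∈ T).Reachable u v) :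
    |F u - F v| ≤ ∑ e ∈ T, |F e.1 - F e.2| := by
  classical
  let p := h.some.toPath
  have hsub : p.1.edges.toFinset ⊆ T.image fun e => s(e.1, e.2) := by
    intro e he
    have hadj := p.1.edges_subset_edgeSet (List.mem_toFinset.1 he)
    induction e using Sym2.ind with
    | _ a b =>
      rw [SimpleGraph.mem_edgeSet, SimpleGraph.fromRel_adj] at hadj
      rcases hadj.2 with hab | hba
      · exact mem_image_of_mem _ hab
      · exact mem_image.2 ⟨_, hba, Sym2.eq_swap⟩
  calc |F u - F v| ≤ (p.1.edges.map (edgeVariation F)).sum := abs_sub_le_sum_edgeVariation F p.1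
    _ = ∑ e ∈ p.1.edges.toFinset, edgeVariation F e :=
        (List.sum_toFinset _ p.2.isTrail.edges_nodup).symm
    _ ≤ ∑ e ∈ T.image fun e => s(e.1, e.2), edgeVariation F e :=
        sum_le_sum_of_subset_of_nonneg hsub fun _ _ _ => edgeVariation_nonneg F _
    _ ≤ ∑ e ∈ T, |F e.1 - F e.2| := sum_image_le_of_nonneg fun _ _ => edgeVariation_nonneg F _

lemma le_sum_abs_tent_sub_of_connected {α : Type*} [PseudoMetricSpace α] {s : ℝ}
    (pts : V → α) {T : Finset (V × V)}
    (hT : (SimpleGraph.fromRel fun a b => (a, b) ∈ T).Connected) (hs : 0 ≤ s) {a b : V}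
    (hab : s ≤ dist (pts b) (pts a)) :
    s ≤ ∑ e ∈ T, |tent s (pts a) (pts e.1) - tent s (pts a) (pts e.2)| :=
  calc s = |tent s (pts a) (pts a) - tent s (pts a) (pts b)| := by
        rw [tent_self hs, tent_eq_zero hab, sub_zero, abs_of_nonneg hs]
    _ ≤ _ := abs_sub_le_sum_of_reachable (fun v => tent s (pts a) (pts v)) (hT.preconnected a b)

end Graph

lemma isSpanningTree_path (k : ℕ) :
    IsSpanningTree (k + 1) (univ.image fun i : Fin k => (i.castSucc, i.succ)) := by
  refine ⟨?_, ?_⟩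
  · rw [card_image_of_injective _ fun i j h => Fin.castSucc_injective _ (Prod.ext_iff.1 h).1]
    simp
  · have hreach : ∀ v : Fin (k + 1), (SimpleGraph.fromRel fun a b =>
        (a, b) ∈ univ.image fun i : Fin k => (i.castSucc, i.succ)).Reachable 0 v :=
      Fin.induction (SimpleGraph.Reachable.refl _) fun i ih => ih.trans <|
        SimpleGraph.Adj.reachable ⟨Fin.castSucc_lt_succ.ne, Or.inl (mem_image_of_mem _ (mem_univ i))⟩
    exact (SimpleGraph.connected_iff _).2 ⟨fun u v => (hreach u).symm.trans (hreach v), ⟨0⟩⟩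

theorem mst_cost_lower_bound_of_separated_general {m n r : ℕ}
    (pts : Fin n → EuclideanSpace ℝ (Fin m)) (t : ℝ) (ht : 0 < t)
    (f : Fin r → Fin n) (hr : 2 ≤ r)
    (hsep : ∀ i j : Fin r, i ≠ j → t < dist (pts (f i)) (pts (f j))) :
    (r : ℝ) * t / 2 ≤ mstCost pts := by
  obtain ⟨k, rfl⟩ : ∃ k, n = k + 1 := Nat.exists_eq_add_one.2 (f ⟨0, by omega⟩).pos
  have : Nontrivial (Fin r) := Fin.nontrivial_iff_two_le.2 hr
  have hc : Pairwise fun i j => 2 * (t / 2) ≤ dist (pts (f i)) (pts (f j)) :=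
    fun i j hij => by linarith [hsep i j hij]
  refine le_csInf ⟨_, _, isSpanningTree_path k, rfl⟩ ?_
  rintro _ ⟨T, hT, rfl⟩
  calc (r : ℝ) * t / 2 = ∑ _i : Fin r, t / 2 := by simp [mul_div_assoc]
    _ ≤ ∑ i, ∑ e ∈ T,
          |tent (t / 2) (pts (f i)) (pts e.1) - tent (t / 2) (pts (f i)) (pts e.2)| :=
        sum_le_sum fun i _ => by
          obtain ⟨j, hji⟩ := exists_ne i
          exact le_sum_abs_tent_sub_of_connected pts hT.2 (b := f j) (by positivity)
            (by linarith [hsep j i hji])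
    _ = ∑ e ∈ T, ∑ i,
          |tent (t / 2) (pts (f i)) (pts e.1) - tent (t / 2) (pts (f i)) (pts e.2)| := sum_comm
    _ ≤ treeCost pts T := sum_le_sum fun e _ => sum_abs_tent_sub_le_dist hc _ _

/-- Proposition: if `X` contains `r ≥ 2` points that are pairwise more
than `t` apart, then the MST cost of `X` is at least `r·t/2`. -/
theorem mst_cost_lower_bound_of_separated {m n r : ℕ}
    (pts : Fin n → EuclideanSpace ℝ (Fin m)) (t : ℝ) (ht : 0 < t)
    (f : Fin r → Fin n) (hf : Function.Injective f) (hr : 2 ≤ r)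
    (hsep : ∀ i j : Fin r, i ≠ j → t < dist (pts (f i)) (pts (f j))) :
    (r : ℝ) * t / 2 ≤ mstCost pts :=
  mst_cost_lower_bound_of_separated_general pts t ht f hr hsep
end
end

section
/- Let G be a random projection from ℝ^m to ℝ^d. If x ∈ ℝ^m is a unit vector (‖x‖ = 1) and t ≥ 1, then Pr(‖Gx‖ ≤ 1/t) ≥ (1/(e·t))^d. -/
/-!
Each coordinate of `Gx` is `⟪row, x⟫ ∼ N(0, 1/d)`, and the rows are independent. If every
coordinate lies in `[-c, c]` with `c = 1/(t√d)`, then `‖Gx‖ ≤ √d c = 1/t`. On that interval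
the Gaussian density is at least its value at the endpoint, so each coordinate lands there with
probability at least `(1/t) · 2φ(1/t) ≥ 1/(e t)`, where `φ` is the standard normal density.
-/

open MeasureTheory ProbabilityTheory
open scoped ENNReal NNReal Classical

noncomputable section

/-- The random projection map: apply a `d × m` matrix `A` to a point of `ℝ^m`. -/
def projMap {m d : ℕ} (A : Fin d → Fin m → ℝ) (x : EuclideanSpace ℝ (Fin m)) :
    EuclideanSpace ℝ (Fin d) :=
  WithLp.toLp 2 fun i => ∑ j, A i j * x j

/-- The distribution of a random projection matrix: i.i.d. `N(0, 1/d)` entries. -/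
def projMeasure (m d : ℕ) : Measure (Fin d → Fin m → ℝ) :=
  Measure.pi fun _ => Measure.pi fun _ => gaussianReal 0 ((d : ℝ≥0))⁻¹

theorem EuclideanSpace.norm_le_sqrt_card_mul {ι : Type*} [Fintype ι] {y : EuclideanSpace ℝ ι}
    {r : ℝ} (hr : 0 ≤ r) (h : ∀ i, |y i| ≤ r) : ‖y‖ ≤ √(Fintype.card ι) * r := by
  rw [EuclideanSpace.norm_eq, ← Real.sqrt_sq hr, ← Real.sqrt_mul (Nat.cast_nonneg _)]
  gcongr
  calc ∑ i, ‖y i‖ ^ 2 ≤ ∑ _i : ι, r ^ 2 :=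
        Finset.sum_le_sum fun i _ => by
          rw [Real.norm_eq_abs]
          exact pow_le_pow_left₀ (abs_nonneg _) (h i) 2
    _ = Fintype.card ι * r ^ 2 := by simp

theorem gaussianPDFReal_sqrt_mul (v : ℝ≥0) (hv : v ≠ 0) (s : ℝ) :
    √v * gaussianPDFReal 0 v (s * √v) = gaussianPDFReal 0 1 s := by
  have hv' : (0 : ℝ) < v := by positivity
  simp only [gaussianPDFReal, sub_zero, NNReal.coe_one, mul_one, mul_pow,
    Real.sq_sqrt hv'.le, Real.sqrt_mul (by positivity : (0:ℝ) ≤ 2 * Real.pi)]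
  field_simp

theorem gaussianPDFReal_le_of_abs_sub_le (μ : ℝ) (v : ℝ≥0) {x y : ℝ}
    (h : |y - μ| ≤ |x - μ|) :
    gaussianPDFReal μ v x ≤ gaussianPDFReal μ v y := by
  have := sq_le_sq.2 h
  simp only [gaussianPDFReal]
  gcongr

/-- The worst case is `|s| = 1`, where `2 · gaussianPDFReal 0 1 1 = √(2 / (π e)) ≥ 1/e`
because `π ≤ 2e`. -/
theorem inv_exp_one_le_two_mul_gaussianPDFReal {s : ℝ} (hs : |s| ≤ 1) :
    (Real.exp 1)⁻¹ ≤ 2 * gaussianPDFReal 0 1 s := by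
  have hexp_half : Real.exp (1 / 2) ^ 2 = Real.exp 1 := by rw [← Real.exp_nat_mul]; norm_num
  have hsqrt : √(2 * Real.pi) ≤ 2 * Real.exp (1 / 2) := by
    rw [Real.sqrt_le_iff, mul_pow, hexp_half]
    refine ⟨by positivity, ?_⟩
    linarith [Real.pi_lt_d2, Real.exp_one_gt_d9]
  calc (Real.exp 1)⁻¹ = 2 * ((2 * Real.exp (1 / 2))⁻¹ * Real.exp (-1 / 2)) := by
        rw [← hexp_half, neg_div, Real.exp_neg]
        field_simp
    _ ≤ 2 * ((√(2 * Real.pi))⁻¹ * Real.exp (-1 / 2)) := by gcongr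
    _ = 2 * gaussianPDFReal 0 1 1 := by simp [gaussianPDFReal]
    _ ≤ 2 * gaussianPDFReal 0 1 s := by
        gcongr
        exact gaussianPDFReal_le_of_abs_sub_le 0 1 (by simpa using hs)

theorem ofReal_two_mul_mul_gaussianPDFReal_le_gaussianReal_Icc (μ : ℝ) {v : ℝ≥0}
    (hv : v ≠ 0) (c : ℝ) :
    ENNReal.ofReal (2 * c * gaussianPDFReal μ v (μ + c))
      ≤ gaussianReal μ v (Set.Icc (μ - c) (μ + c)) := by
  rw [gaussianReal_apply μ hv, ENNReal.ofReal_mul' (gaussianPDFReal_nonneg _ _ _), mul_comm]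
  calc ENNReal.ofReal (gaussianPDFReal μ v (μ + c)) * ENNReal.ofReal (2 * c)
      = ∫⁻ _ in Set.Icc (μ - c) (μ + c), gaussianPDF μ v (μ + c) := by
        rw [setLIntegral_const, Real.volume_Icc, gaussianPDF]
        congr 2
        ring
    _ ≤ ∫⁻ y in Set.Icc (μ - c) (μ + c), gaussianPDF μ v y := by
        refine setLIntegral_mono (measurable_gaussianPDF μ v) fun y hy => ?_
        refine ENNReal.ofReal_le_ofReal (gaussianPDFReal_le_of_abs_sub_le μ v ?_)
        rw [add_sub_cancel_left]
        exact (abs_sub_le_iff.2 ⟨by linarith [hy.2], by linarith [hy.1]⟩).trans (le_abs_self c)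

theorem ofReal_div_exp_one_le_gaussianReal_Icc (μ : ℝ) {v : ℝ≥0} (hv : v ≠ 0) {s : ℝ}
    (hs₀ : 0 ≤ s) (hs₁ : s ≤ 1) :
    ENNReal.ofReal (s / Real.exp 1)
      ≤ gaussianReal μ v (Set.Icc (μ - s * √v) (μ + s * √v)) := by
  refine le_trans (ENNReal.ofReal_le_ofReal ?_)
    (ofReal_two_mul_mul_gaussianPDFReal_le_gaussianReal_Icc μ hv (s * √v))
  have hshift : gaussianPDFReal μ v (μ + s * √v) = gaussianPDFReal 0 v (s * √v) := by
    simp [gaussianPDFReal]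
  calc s / Real.exp 1 ≤ s * (2 * gaussianPDFReal 0 1 s) := by
        rw [div_eq_mul_inv]
        gcongr
        exact inv_exp_one_le_two_mul_gaussianPDFReal (abs_le.2 ⟨by linarith, hs₁⟩)
    _ = 2 * (s * √v) * gaussianPDFReal μ v (μ + s * √v) := by
        rw [hshift, ← gaussianPDFReal_sqrt_mul v hv]
        ring

open Complex in
theorem map_pi_gaussianReal_sum_mul {ι : Type*} [Fintype ι] (v : ℝ≥0)
    (x : EuclideanSpace ℝ ι) :
    (Measure.pi fun _ : ι => gaussianReal 0 v).map (fun a => ∑ j, a j * x j)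
      = gaussianReal 0 (‖x‖₊ ^ 2 * v) := by
  refine Measure.ext_of_charFun (funext fun s => ?_)
  have hf : (fun a : ι → ℝ => ∑ j, a j * x j)
      = (fun y => inner ℝ y x) ∘ WithLp.toLp 2 := by
    ext a; simp [PiLp.inner_apply, mul_comm]
  have hinner (y : EuclideanSpace ℝ ι) :
      inner ℝ (inner ℝ y x) s = inner ℝ y (s • x) := by
    simp [real_inner_smul_right]
  rw [hf, ← Measure.map_map (by fun_prop) (by fun_prop), charFun_apply,
    integral_map (by fun_prop) (by fun_prop)]
  simp_rw [hinner]
  rw [← charFun_apply, charFun_pi, charFun_gaussianReal]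
  simp_rw [charFun_gaussianReal, ← exp_sum]
  congr 1
  simp only [ofReal_zero, mul_zero, zero_mul, zero_sub, Finset.sum_neg_distrib, neg_inj]
  push_cast [← ofReal_pow, ← ofReal_sum, ← EuclideanSpace.real_norm_sq_eq, norm_smul, mul_pow,
    ← Finset.sum_div, ← Finset.mul_sum]
  simp only [Real.norm_eq_abs, sq_abs]
  ring

/-- Proposition: anti-concentration of the norm of a projected unit
vector: for a unit vector `x` and `t ≥ 1`, `Pr(‖Gx‖ ≤ 1/t) ≥ (1/(e·t))^d`. -/
theorem projected_norm_small_probability_lower {m d : ℕ}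
    (x : EuclideanSpace ℝ (Fin m)) (hx : ‖x‖ = 1) (t : ℝ) (ht : 1 ≤ t) :
    ENNReal.ofReal ((1 / (Real.exp 1 * t)) ^ d)
      ≤ projMeasure m d {A | ‖projMap A x‖ ≤ 1 / t} := by
  have ht₀ : 0 < t := by linarith
  set v : ℝ≥0 := (d : ℝ≥0)⁻¹
  set c : ℝ := t⁻¹ * √v
  set row : Set (Fin m → ℝ) := (fun a => ∑ j, a j * x j) ⁻¹' Set.Icc (-c) c
  have hrow (i : Fin d) :
      ENNReal.ofReal (1 / (Real.exp 1 * t)) ≤ Measure.pi (fun _ => gaussianReal 0 v) row := by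
    have hv : v ≠ 0 := by simpa [v] using i.pos.ne'
    rw [← Measure.map_apply (by fun_prop) measurableSet_Icc, map_pi_gaussianReal_sum_mul,
      show ‖x‖₊ = 1 from NNReal.eq hx, one_pow, one_mul, one_div, mul_inv, mul_comm,
      ← div_eq_mul_inv]
    simpa [c] using ofReal_div_exp_one_le_gaussianReal_Icc 0 hv (inv_nonneg.2 ht₀.le)
      (inv_le_one_of_one_le₀ ht)
  have hsub : Set.univ.pi (fun _ : Fin d => row) ⊆ {A | ‖projMap A x‖ ≤ 1 / t} := by
    intro A hA
    refine (EuclideanSpace.norm_le_sqrt_card_mul (y := projMap A x) (r := c) (by positivity)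
      fun i => abs_le.2 (hA i trivial)).trans ?_
    calc √(Fintype.card (Fin d)) * c = t⁻¹ * √(d * (d : ℝ)⁻¹) := by
          simp [c, v, mul_left_comm]
      _ ≤ t⁻¹ * 1 := by gcongr; exact Real.sqrt_le_one.2 mul_inv_le_one
      _ = 1 / t := by ring
  calc ENNReal.ofReal ((1 / (Real.exp 1 * t)) ^ d)
      = ∏ _i : Fin d, ENNReal.ofReal (1 / (Real.exp 1 * t)) := by
        rw [ENNReal.ofReal_pow (by positivity), Finset.prod_const, Finset.card_univ,
          Fintype.card_fin]
    _ ≤ ∏ _i : Fin d, Measure.pi (fun _ => gaussianReal 0 v) row :=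
        Finset.prod_le_prod' fun i _ => hrow i
    _ = projMeasure m d (Set.univ.pi fun _ : Fin d => row) := (Measure.pi_pi _ _).symm
    _ ≤ projMeasure m d {A | ‖projMap A x‖ ≤ 1 / t} := measure_mono hsub
end
end

section
/- Let X be a finite set of points in Euclidean space ℝ^m. For each p ∈ X let r_p be the unique positive real satisfying Σ_{q∈X, ‖p−q‖≤r_p} (r_p² − ‖p−q‖²) = 1. Let C_OPT be the optimal squared facility location cost of X, i.e. the minimum over nonempty F ⊆ X of |F| + Σ_{x∈X} min_{f∈F} ‖x−f‖². Then (1/8)·C_OPT ≤ Σ_{p∈X} r_p² ≤ 24·C_OPT. -/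
open Finset
open scoped Classical

noncomputable section

/-- Squared facility location cost of a set of facilities `F` for a dataset `X`. -/
def sqFlCost {m : ℕ} (X F : Finset (EuclideanSpace ℝ (Fin m))) : ℝ :=
  F.card + ∑ x ∈ X, sInf ((fun f => dist x f ^ 2) '' (F : Set (EuclideanSpace ℝ (Fin m))))

/-- Optimal squared facility location cost of a dataset `X`. -/
def optSqFlCost {m : ℕ} (X : Finset (EuclideanSpace ℝ (Fin m))) : ℝ :=
  sInf {c | ∃ F, F ⊆ X ∧ F.Nonempty ∧ sqFlCost X F = c}

/-- `r` is the squared-cost radius of `p` for the point set `Y`: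
`∑_{q ∈ Y, ‖p−q‖ ≤ r} (r² − ‖p−q‖²) = 1`. -/
def IsSqRadius {m : ℕ} (Y : Finset (EuclideanSpace ℝ (Fin m))) (p : EuclideanSpace ℝ (Fin m))
    (r : ℝ) : Prop :=
  0 < r ∧ ∑ q ∈ Y.filter (fun q => dist p q ≤ r), (r ^ 2 - dist p q ^ 2) = 1

/-- If the ball sum at radius `s ≥ 0` already reaches `1`, then `rp ≤ s`. -/
private lemma radius_le' {α : Type*} [PseudoMetricSpace α] (X : Finset α) {p : α} (hp : p ∈ X)
    {rp : ℝ} (hrp : 0 < rp)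
    (heq : ∑ q ∈ X.filter (fun q => dist p q ≤ rp), (rp ^ 2 - dist p q ^ 2) = 1)
    {s : ℝ} (hs : 0 ≤ s)
    (h : 1 ≤ ∑ q ∈ X.filter (fun q => dist p q ≤ s), (s ^ 2 - dist p q ^ 2)) :
    rp ≤ s := by
  by_contra hc
  push_neg at hc
  set T := X.filter (fun q => dist p q ≤ s) with hT
  have hpT : p ∈ T := by simp [hT, hp, hs]
  have hTsub : T ⊆ X.filter (fun q => dist p q ≤ rp) := by
    intro q hq
    simp only [hT, mem_filter] at hq ⊢
    exact ⟨hq.1, hq.2.trans hc.le⟩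
  have h1 : ∑ q ∈ T, (rp ^ 2 - dist p q ^ 2) ≤ 1 := by
    rw [← heq]
    refine Finset.sum_le_sum_of_subset_of_nonneg hTsub ?_
    intro q hq _
    simp only [mem_filter] at hq
    nlinarith [dist_nonneg (x := p) (y := q), hq.2]
  have h2 : ∑ q ∈ T, (s ^ 2 - dist p q ^ 2)
      = ∑ q ∈ T, (rp ^ 2 - dist p q ^ 2) - T.card * (rp ^ 2 - s ^ 2) := by
    rw [Finset.sum_congr rfl (show ∀ q ∈ T, s ^ 2 - dist p q ^ 2
        = (rp ^ 2 - dist p q ^ 2) - (rp ^ 2 - s ^ 2) from fun q _ => by ring),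
      Finset.sum_sub_distrib, Finset.sum_const, nsmul_eq_mul]
  have hcard : (1 : ℝ) ≤ T.card := by exact_mod_cast Finset.card_pos.mpr ⟨p, hpT⟩
  have hd : (0:ℝ) < rp ^ 2 - s ^ 2 := by nlinarith
  have := mul_le_mul_of_nonneg_right hcard hd.le
  rw [one_mul] at this
  linarith

/-- Lipschitz property of the radii: `r q ≤ r p + dist p q`. -/
private lemma radius_lipschitz' {α : Type*} [PseudoMetricSpace α] (X : Finset α) {p q : α}
    (hp : p ∈ X) (hq : q ∈ X) {rp rq : ℝ} (hrp : 0 < rp) (hrq : 0 < rq)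
    (heqp : ∑ q' ∈ X.filter (fun q' => dist p q' ≤ rp), (rp ^ 2 - dist p q' ^ 2) = 1)
    (heqq : ∑ q' ∈ X.filter (fun q' => dist q q' ≤ rq), (rq ^ 2 - dist q q' ^ 2) = 1) :
    rq ≤ rp + dist p q := by
  have hc : (0:ℝ) ≤ dist p q := dist_nonneg
  apply radius_le' X hq hrq heqq (by positivity)
  calc (1:ℝ) = ∑ q' ∈ X.filter (fun q' => dist p q' ≤ rp), (rp ^ 2 - dist p q' ^ 2) := heqp.symm
    _ ≤ ∑ q' ∈ X.filter (fun q' => dist p q' ≤ rp),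
        ((rp + dist p q) ^ 2 - dist q q' ^ 2) := by
        apply Finset.sum_le_sum
        intro q' hq'
        simp only [mem_filter] at hq'
        have h3 : dist q q' ≤ dist p q + dist p q' := by
          calc dist q q' ≤ dist q p + dist p q' := dist_triangle _ _ _
            _ = dist p q + dist p q' := by rw [dist_comm]
        nlinarith [dist_nonneg (x := p) (y := q'), dist_nonneg (x := q) (y := q'), hq'.2]
    _ ≤ ∑ q' ∈ X.filter (fun q' => dist q q' ≤ rp + dist p q),
        ((rp + dist p q) ^ 2 - dist q q' ^ 2) := by
        apply Finset.sum_le_sum_of_subset_of_nonneg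
        · intro q' hq'
          simp only [mem_filter] at hq' ⊢
          refine ⟨hq'.1, ?_⟩
          calc dist q q' ≤ dist q p + dist p q' := dist_triangle _ _ _
            _ ≤ rp + dist p q := by rw [dist_comm]; linarith [hq'.2]
        · intro q' hq' _
          simp only [mem_filter] at hq'
          nlinarith [dist_nonneg (x := q) (y := q'), hq'.2]

/-- Crowding bound: if `B` has points within squared distance `M` of `f`, then
`r f ^ 2 ≤ M + 1 / |B|`. -/
private lemma radius_sq_le' {α : Type*} [PseudoMetricSpace α] (X : Finset α) {f : α} (hf : f ∈ X)
    {rf : ℝ} (hrf : 0 < rf)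
    (heq : ∑ q ∈ X.filter (fun q => dist f q ≤ rf), (rf ^ 2 - dist f q ^ 2) = 1)
    (B : Finset α) (hB : B ⊆ X) (hBne : B.Nonempty) {M : ℝ} (hM : 0 ≤ M)
    (hd : ∀ q ∈ B, dist f q ^ 2 ≤ M) :
    rf ^ 2 ≤ M + 1 / B.card := by
  have hcard : (0:ℝ) < B.card := by exact_mod_cast Finset.card_pos.mpr hBne
  set s := Real.sqrt (M + 1 / B.card) with hsdef
  have hs2 : s ^ 2 = M + 1 / B.card := Real.sq_sqrt (by positivity)
  have hsnn : 0 ≤ s := Real.sqrt_nonneg _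
  have hrle : rf ≤ s := by
    apply radius_le' X hf hrf heq hsnn
    have hsub : B ⊆ X.filter (fun q => dist f q ≤ s) := by
      intro q hq
      simp only [mem_filter]
      refine ⟨hB hq, ?_⟩
      have h1 := hd q hq
      nlinarith [dist_nonneg (x := f) (y := q), hcard, one_div_pos.mpr hcard]
    calc (1:ℝ) = ∑ _q ∈ B, (1 / (B.card : ℝ)) := by
          rw [Finset.sum_const, nsmul_eq_mul]; field_simp
      _ ≤ ∑ q ∈ B, (s ^ 2 - dist f q ^ 2) := by
          apply Finset.sum_le_sum
          intro q hq
          have := hd q hq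
          rw [hs2]
          nlinarith [dist_nonneg (x := f) (y := q)]
      _ ≤ ∑ q ∈ X.filter (fun q => dist f q ≤ s), (s ^ 2 - dist f q ^ 2) := by
          apply Finset.sum_le_sum_of_subset_of_nonneg hsub
          intro q hq _
          simp only [mem_filter] at hq
          nlinarith [dist_nonneg (x := f) (y := q), hq.2]
  nlinarith [hrle, hrf.le, hs2]

private lemma greedy' {α : Type*} [PseudoMetricSpace α] (X : Finset α) (r : α → ℝ)
    (hr0 : ∀ p ∈ X, 0 ≤ r p) :
    ∀ Y : Finset α, Y ⊆ X → ∃ F : Finset α, F ⊆ Y ∧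
      (∀ x ∈ Y, ∃ f ∈ F, dist x f ≤ 2 * r x) ∧
      (∀ f ∈ F, ∀ f' ∈ F, f ≠ f' → r f + r f' < dist f f') ∧
      (∀ f ∈ F, ∀ q ∈ Y, r f ≤ r q + dist f q / 2) := by
  intro Y
  induction Y using Finset.strongInduction with
  | _ Y ih =>
    intro hYX
    rcases Y.eq_empty_or_nonempty with rfl | hYne
    · exact ⟨∅, by simp, by simp, by simp, by simp⟩
    obtain ⟨p, hpY, hpmax⟩ := Finset.exists_max_image Y r hYne
    set Y' := Y.erase p with hY'
    obtain ⟨F', hF'sub, hP1, hP2, hP3⟩ :=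
      ih Y' (Finset.erase_ssubset hpY) ((Finset.erase_subset _ _).trans hYX)
    have hY'Y : Y' ⊆ Y := Finset.erase_subset _ _
    by_cases hcov : ∃ f ∈ F', dist p f ≤ 2 * r p
    · refine ⟨F', hF'sub.trans hY'Y, ?_, hP2, ?_⟩
      · intro x hx
        by_cases hxp : x = p
        · subst hxp; exact hcov
        · exact hP1 x (Finset.mem_erase.2 ⟨hxp, hx⟩)
      · intro f hf q hq
        by_cases hqp : q = p
        · subst hqp
          have h1 : r f ≤ r q := hpmax f (hY'Y (hF'sub hf))
          have h2 : (0:ℝ) ≤ dist f q := dist_nonneg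
          linarith
        · exact hP3 f hf q (Finset.mem_erase.2 ⟨hqp, hq⟩)
    · push_neg at hcov
      refine ⟨insert p F', ?_, ?_, ?_, ?_⟩
      · exact Finset.insert_subset hpY (hF'sub.trans hY'Y)
      · intro x hx
        by_cases hxp : x = p
        · subst hxp
          refine ⟨x, Finset.mem_insert_self _ _, ?_⟩
          simp only [dist_self]
          have := hr0 x (hYX hx)
          linarith
        · obtain ⟨f, hf, hdf⟩ := hP1 x (Finset.mem_erase.2 ⟨hxp, hx⟩)
          exact ⟨f, Finset.mem_insert_of_mem hf, hdf⟩
      · intro f hf f' hf' hne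
        rcases Finset.mem_insert.1 hf with rfl | hfF'
        · rcases Finset.mem_insert.1 hf' with rfl | hf'F'
          · exact absurd rfl hne
          · have h1 := hcov f' hf'F'
            have h2 : r f' ≤ r f := hpmax f' (hY'Y (hF'sub hf'F'))
            linarith
        · rcases Finset.mem_insert.1 hf' with rfl | hf'F'
          · have h1 := hcov f hfF'
            have h2 : r f ≤ r f' := hpmax f (hY'Y (hF'sub hfF'))
            rw [dist_comm]
            linarith
          · exact hP2 f hfF' f' hf'F' hne
      · intro f hf q hq
        rcases Finset.mem_insert.1 hf with rfl | hfF'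
        · by_cases hqp : q = f
          · subst hqp; linarith [dist_nonneg (x := q) (y := q)]
          · obtain ⟨f', hf'F', hqf'⟩ := hP1 q (Finset.mem_erase.2 ⟨hqp, hq⟩)
            have h1 := hcov f' hf'F'
            have h2 : dist f f' ≤ dist f q + dist q f' := dist_triangle _ _ _
            linarith
        · by_cases hqp : q = p
          · subst hqp
            have h1 : r f ≤ r q := hpmax f (hY'Y (hF'sub hfF'))
            linarith [dist_nonneg (x := f) (y := q)]
          · exact hP3 f hfF' q (Finset.mem_erase.2 ⟨hqp, hq⟩)

/-- Lemma: the sum of squared radii is a constant-factor approximation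
to the optimal squared facility location cost: `(1/8)·C_OPT ≤ Σ_p r_p² ≤ 24·C_OPT`. -/
theorem sq_radii_approximate_sq_fl_cost {m : ℕ}
    (X : Finset (EuclideanSpace ℝ (Fin m))) (hX : X.Nonempty)
    (r : EuclideanSpace ℝ (Fin m) → ℝ) (hr : ∀ p ∈ X, IsSqRadius X p (r p)) :
    (1 / 8) * optSqFlCost X ≤ ∑ p ∈ X, r p ^ 2 ∧
      ∑ p ∈ X, r p ^ 2 ≤ 24 * optSqFlCost X := by
  classical
  have hrpos : ∀ p ∈ X, 0 < r p := fun p hp => (hr p hp).1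
  have heq : ∀ p ∈ X, ∑ q ∈ X.filter (fun q => dist p q ≤ r p), (r p ^ 2 - dist p q ^ 2) = 1 :=
    fun p hp => (hr p hp).2
  have hRnn : 0 ≤ ∑ p ∈ X, r p ^ 2 := Finset.sum_nonneg fun p _ => sq_nonneg _
  -- Part 1: every feasible solution costs at least (∑ r²)/8
  have key_ub : ∀ F : Finset (EuclideanSpace ℝ (Fin m)), F ⊆ X → F.Nonempty →
      ∑ p ∈ X, r p ^ 2 ≤ 8 * sqFlCost X F := by
    intro F hFX hFne
    have hbdd : ∀ x : EuclideanSpace ℝ (Fin m),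
        BddBelow ((fun f => dist x f ^ 2) '' (F : Set (EuclideanSpace ℝ (Fin m)))) :=
      fun x => ⟨0, by rintro _ ⟨f, _, rfl⟩; positivity⟩
    set cst : EuclideanSpace ℝ (Fin m) → ℝ :=
      fun x => sInf ((fun f => dist x f ^ 2) '' (F : Set (EuclideanSpace ℝ (Fin m)))) with hcst
    have hcst_le : ∀ x, ∀ f ∈ F, cst x ≤ dist x f ^ 2 := fun x f hf =>
      csInf_le (hbdd x) ⟨f, hf, rfl⟩
    have hcst_nonneg : ∀ x, 0 ≤ cst x := fun x =>
      Real.sInf_nonneg (by rintro _ ⟨f, _, rfl⟩; positivity)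
    have hattain : ∀ x, ∃ f, f ∈ F ∧ cst x = dist x f ^ 2 := by
      intro x
      have hne : ((fun f => dist x f ^ 2) '' (F : Set (EuclideanSpace ℝ (Fin m)))).Nonempty :=
        (hFne.to_set).image _
      have hfin : ((fun f => dist x f ^ 2) '' (F : Set (EuclideanSpace ℝ (Fin m)))).Finite :=
        (F.finite_toSet).image _
      obtain ⟨f, hf, hfx⟩ := hne.csInf_mem hfin
      exact ⟨f, hf, hfx.symm⟩
    choose N hNF hNd using hattain
    have fiber_bound : ∀ f ∈ F,
        ∑ p ∈ X.filter (fun p => N p = f), r p ^ 2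
          ≤ 6 * ∑ p ∈ X.filter (fun p => N p = f), cst p + 6 := by
      intro f hf
      set A := X.filter (fun p => N p = f) with hA
      have hAX : A ⊆ X := Finset.filter_subset _ _
      have hfX : f ∈ X := hFX hf
      have hcsum_nn : 0 ≤ ∑ p ∈ A, cst p := Finset.sum_nonneg fun p _ => hcst_nonneg p
      rcases A.eq_empty_or_nonempty with hAe | hAne
      · rw [hAe]; simp
      have hcp : ∀ p ∈ A, cst p = dist f p ^ 2 := by
        intro p hp
        have h1 : N p = f := (Finset.mem_filter.1 hp).2
        rw [hNd p, h1, dist_comm]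
      have hs : (0:ℝ) < A.card := by exact_mod_cast Finset.card_pos.mpr hAne
      set sc := ∑ p ∈ A, cst p with hsc
      set t := (2 * sc + 1) / A.card with htdef
      have ht : 0 < t := by positivity
      set B := A.filter (fun q => dist f q ^ 2 ≤ t) with hB
      set C := A.filter (fun q => ¬ dist f q ^ 2 ≤ t) with hC
      have hBC : B.card + C.card = A.card := Finset.card_filter_add_card_filter_not _
      have hCt : (C.card : ℝ) * t ≤ sc := by
        calc (C.card : ℝ) * t = ∑ _q ∈ C, t := by rw [Finset.sum_const, nsmul_eq_mul]
          _ ≤ ∑ q ∈ C, cst q := Finset.sum_le_sum (fun q hq => by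
              have h1 := (Finset.mem_filter.1 hq).2
              have h2 := hcp q (Finset.mem_filter.1 hq).1
              push_neg at h1
              rw [h2]
              exact h1.le)
          _ ≤ sc := Finset.sum_le_sum_of_subset_of_nonneg (Finset.filter_subset _ _)
              (fun q _ _ => hcst_nonneg q)
      have hCcard : (C.card : ℝ) ≤ (A.card : ℝ) / 2 := by
        rw [htdef, ← mul_div_assoc, div_le_iff₀ hs] at hCt
        nlinarith [hCt, hcsum_nn, Nat.cast_nonneg (α := ℝ) C.card, hs]
      have hBcardA : (B.card : ℝ) + C.card = A.card := by exact_mod_cast hBC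
      have hBcard : (A.card : ℝ) / 2 ≤ B.card := by linarith
      have hBpos : (0:ℝ) < B.card := by linarith
      have hBne : B.Nonempty := Finset.card_pos.mp (by exact_mod_cast hBpos)
      have hrf2 : r f ^ 2 ≤ t + 1 / B.card :=
        radius_sq_le' X hfX (hrpos f hfX) (heq f hfX) B ((Finset.filter_subset _ _).trans hAX)
          hBne ht.le (fun q hq => (Finset.mem_filter.1 hq).2)
      have hrf2' : (A.card : ℝ) * r f ^ 2 ≤ 2 * sc + 3 := by
        have h1 : 1 / (B.card:ℝ) ≤ 2 / A.card := by
          rw [div_le_div_iff₀ hBpos hs]; linarith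
        have h2 : r f ^ 2 ≤ (2 * sc + 1) / A.card + 2 / A.card := by
          refine hrf2.trans ?_
          rw [htdef]
          linarith
        calc (A.card:ℝ) * r f ^ 2 ≤ A.card * ((2 * sc + 1) / A.card + 2 / A.card) :=
              mul_le_mul_of_nonneg_left h2 hs.le
          _ = 2 * sc + 3 := by field_simp; ring
      have hpt : ∀ p ∈ A, r p ^ 2 ≤ 2 * r f ^ 2 + 2 * cst p := by
        intro p hp
        have hpX : p ∈ X := hAX hp
        have hlip : r p ≤ r f + dist f p :=
          radius_lipschitz' X hfX hpX (hrpos f hfX) (hrpos p hpX) (heq f hfX) (heq p hpX)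
        have h2 := hcp p hp
        have h5 : r p ^ 2 ≤ (r f + dist f p) ^ 2 :=
          pow_le_pow_left₀ (hrpos p hpX).le hlip 2
        nlinarith [h5, sq_nonneg (r f - dist f p)]
      calc ∑ p ∈ A, r p ^ 2 ≤ ∑ p ∈ A, (2 * r f ^ 2 + 2 * cst p) := Finset.sum_le_sum hpt
        _ = (A.card : ℝ) * (2 * r f ^ 2) + 2 * sc := by
            rw [Finset.sum_add_distrib, Finset.sum_const, nsmul_eq_mul, ← Finset.mul_sum]
        _ ≤ 6 * sc + 6 := by nlinarith [hrf2']
    have hfib : ∑ f ∈ F, ∑ p ∈ X.filter (fun p => N p = f), r p ^ 2 = ∑ p ∈ X, r p ^ 2 :=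
      Finset.sum_fiberwise_of_maps_to (fun p _ => hNF p) _
    have hfibc : ∑ f ∈ F, ∑ p ∈ X.filter (fun p => N p = f), cst p = ∑ p ∈ X, cst p :=
      Finset.sum_fiberwise_of_maps_to (fun p _ => hNF p) _
    have hcX_nn : 0 ≤ ∑ p ∈ X, cst p := Finset.sum_nonneg fun p _ => hcst_nonneg p
    have hFcard : (0:ℝ) ≤ F.card := by positivity
    have hcost : sqFlCost X F = F.card + ∑ p ∈ X, cst p := by
      rw [sqFlCost, hcst]
    calc ∑ p ∈ X, r p ^ 2 = ∑ f ∈ F, ∑ p ∈ X.filter (fun p => N p = f), r p ^ 2 := hfib.symm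
      _ ≤ ∑ f ∈ F, (6 * ∑ p ∈ X.filter (fun p => N p = f), cst p + 6) :=
          Finset.sum_le_sum fiber_bound
      _ = 6 * ∑ p ∈ X, cst p + 6 * F.card := by
          rw [Finset.sum_add_distrib, ← Finset.mul_sum, hfibc, Finset.sum_const, nsmul_eq_mul]
          ring
      _ ≤ 8 * sqFlCost X F := by rw [hcost]; linarith
  -- Part 2: a feasible solution of cost at most 8 ∑ r²
  have key_lb : ∃ c, (∃ F, F ⊆ X ∧ F.Nonempty ∧ sqFlCost X F = c) ∧
      c ≤ 8 * ∑ p ∈ X, r p ^ 2 := by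
    obtain ⟨F, hFX, hP1, hP2, hP3⟩ :=
      greedy' X r (fun p hp => (hrpos p hp).le) X Finset.Subset.rfl
    have hFne : F.Nonempty := by
      obtain ⟨x, hx⟩ := hX
      obtain ⟨f, hf, _⟩ := hP1 x hx
      exact ⟨f, hf⟩
    refine ⟨sqFlCost X F, ⟨F, hFX, hFne, rfl⟩, ?_⟩
    have hbdd : ∀ x : EuclideanSpace ℝ (Fin m),
        BddBelow ((fun f => dist x f ^ 2) '' (F : Set (EuclideanSpace ℝ (Fin m)))) :=
      fun x => ⟨0, by rintro _ ⟨f, _, rfl⟩; positivity⟩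
    have hconn : ∀ x ∈ X,
        sInf ((fun f => dist x f ^ 2) '' (F : Set (EuclideanSpace ℝ (Fin m))))
          ≤ 4 * r x ^ 2 := by
      intro x hx
      obtain ⟨f, hf, hdf⟩ := hP1 x hx
      calc sInf ((fun f => dist x f ^ 2) '' (F : Set (EuclideanSpace ℝ (Fin m))))
          ≤ dist x f ^ 2 := csInf_le (hbdd x) ⟨f, hf, rfl⟩
        _ ≤ 4 * r x ^ 2 := by
            nlinarith [dist_nonneg (x := x) (y := f), (hrpos x hx).le]
    set Bf : EuclideanSpace ℝ (Fin m) → Finset (EuclideanSpace ℝ (Fin m)) :=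
      fun f => X.filter (fun q => dist f q ≤ r f) with hBf
    have hone : ∀ f ∈ F, (1:ℝ) ≤ ∑ q ∈ Bf f, 4 * r q ^ 2 := by
      intro f hf
      have hfX : f ∈ X := hFX hf
      calc (1:ℝ) = ∑ q ∈ Bf f, (r f ^ 2 - dist f q ^ 2) := (heq f hfX).symm
        _ ≤ ∑ q ∈ Bf f, 4 * r q ^ 2 := by
            apply Finset.sum_le_sum
            intro q hq
            simp only [hBf, Finset.mem_filter] at hq
            have h3 := hP3 f hf q hq.1
            have h4 : r f ≤ 2 * r q := by linarith [hq.2]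
            nlinarith [dist_nonneg (x := f) (y := q), (hrpos f hfX).le, (hrpos q hq.1).le]
    have hdisj : (F : Set (EuclideanSpace ℝ (Fin m))).PairwiseDisjoint Bf := by
      intro f hf f' hf' hne
      have hP2' := hP2 f (Finset.mem_coe.mp hf) f' (Finset.mem_coe.mp hf') hne
      refine Finset.disjoint_left.mpr ?_
      intro q hq hq'
      simp only [hBf, Finset.mem_filter] at hq hq'
      have h2 : dist f f' ≤ dist f q + dist q f' := dist_triangle _ _ _
      rw [dist_comm q f'] at h2
      linarith [hq.2, hq'.2]
    have hopen : (F.card : ℝ) ≤ 4 * ∑ q ∈ X, r q ^ 2 := by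
      calc (F.card : ℝ) = ∑ _f ∈ F, (1:ℝ) := by
            rw [Finset.sum_const, nsmul_eq_mul, mul_one]
        _ ≤ ∑ f ∈ F, ∑ q ∈ Bf f, 4 * r q ^ 2 := Finset.sum_le_sum hone
        _ = ∑ q ∈ F.biUnion Bf, 4 * r q ^ 2 := (Finset.sum_biUnion hdisj).symm
        _ ≤ ∑ q ∈ X, 4 * r q ^ 2 := Finset.sum_le_sum_of_subset_of_nonneg
            (Finset.biUnion_subset.mpr fun f _ => Finset.filter_subset _ _)
            (fun q _ _ => by positivity)
        _ = 4 * ∑ q ∈ X, r q ^ 2 := by rw [Finset.mul_sum]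
    have hconn' : ∑ x ∈ X, sInf ((fun f => dist x f ^ 2) '' (F : Set (EuclideanSpace ℝ (Fin m))))
        ≤ ∑ x ∈ X, 4 * r x ^ 2 := Finset.sum_le_sum hconn
    have h4 : ∑ x ∈ X, 4 * r x ^ 2 = 4 * ∑ x ∈ X, r x ^ 2 := by rw [Finset.mul_sum]
    rw [sqFlCost]
    linarith
  -- combine
  set S := {c | ∃ F, F ⊆ X ∧ F.Nonempty ∧ sqFlCost X F = c} with hS
  have hSne : S.Nonempty := ⟨sqFlCost X X, X, Finset.Subset.rfl, hX, rfl⟩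
  have hSbdd : BddBelow S := by
    refine ⟨0, ?_⟩
    rintro c ⟨F, hFX, hFne, rfl⟩
    rw [sqFlCost]
    have h1 : 0 ≤ ∑ x ∈ X, sInf ((fun f => dist x f ^ 2) ''
        (F : Set (EuclideanSpace ℝ (Fin m)))) :=
      Finset.sum_nonneg fun x _ => Real.sInf_nonneg (by rintro _ ⟨f, _, rfl⟩; positivity)
    positivity
  have hopt : optSqFlCost X = sInf S := by rw [optSqFlCost, hS]
  have hub : ∑ p ∈ X, r p ^ 2 ≤ 8 * optSqFlCost X := by
    rw [hopt]
    have h8 : (∑ p ∈ X, r p ^ 2) / 8 ≤ sInf S := by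
      refine le_csInf hSne ?_
      rintro c ⟨F, h1, h2, rfl⟩
      linarith [key_ub F h1 h2]
    linarith
  have hlb : optSqFlCost X ≤ 8 * ∑ p ∈ X, r p ^ 2 := by
    obtain ⟨c, hcS, hc⟩ := key_lb
    rw [hopt]
    exact (csInf_le hSbdd hcS).trans hc
  exact ⟨by linarith, by linarith⟩
end
end
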